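/- For each N ≥ 2 define ρ_N := inf over all automorphisms φ of F_N of λ_A(φ)/Λ_A(φ). Then ρ_N ≤ 2/(N+1) for every N ≥ 2; consequently lim_{N→∞} ρ_N = 0 and limsup_{N→∞} N·ρ_N < ∞, i.e., ρ_N = O(1/N). -/

import Mathlib

/-- The reduced word length of an element of the free group on `Fin N`. -/
noncomputable def wlen {N : ℕ} (w : FreeGroup (Fin N)) : ℕ := w.toWord.length

/-- The cyclically reduced length of `w`: the minimal word length among all conjugates. -/
noncomputable def cyclen {N : ℕ} (w : FreeGroup (Fin N)) : ℕ :=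
  sInf (Set.range fun g : FreeGroup (Fin N) => wlen (g * w * g⁻¹))

/-- The extremal stretching factor: `sup_{w ≠ 1} ‖φ w‖_A / ‖w‖_A`. -/
noncomputable def LambdaA {N : ℕ} (φ : FreeGroup (Fin N) → FreeGroup (Fin N)) : ℝ :=
  ⨆ w : {w : FreeGroup (Fin N) // w ≠ 1}, (cyclen (φ w.1) : ℝ) / (cyclen w.1 : ℝ)

/-- The average of `‖φ w‖_A` over the sphere of radius `n`, divided by `n`. -/
noncomputable def avg (N : ℕ) (φ : FreeGroup (Fin N) → FreeGroup (Fin N)) (n : ℕ) : ℝ :=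
  (∑' w : {w : FreeGroup (Fin N) // wlen w = n}, (cyclen (φ w.1) : ℝ)) /
    ((n : ℝ) * ((2 * N * (2 * N - 1) ^ (n - 1) : ℕ) : ℝ))

/-- The generic stretching factor `λ_A(φ) = limsup_n avg_n(φ)`. -/
noncomputable def lamA (N : ℕ) (φ : FreeGroup (Fin N) → FreeGroup (Fin N)) : ℝ :=
  Filter.limsup (avg N φ) Filter.atTop

/-- `ρ_N`: the infimum over all automorphisms `φ` of `F_N` of `λ_A(φ)/Λ_A(φ)`. -/
noncomputable def rho (N : ℕ) : ℝ :=
  ⨅ φ : MulAut (FreeGroup (Fin N)), lamA N (fun w => φ w) / LambdaA (fun w => φ w)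

/-!
The witness is the transvection `φ : a₁ ↦ a₁ a₂ᴺ` fixing the other generators. The exponent sum
is a conjugation invariant bounded by the length, so `‖φ(a₁)‖ ≥ N + 1` and `Λ(φ) ≥ N + 1`.
Conversely `|φ(w)| ≤ |w| + N·#₁(w)`, where `#₁(w)` counts the letters `a₁^{±1}` of `w`.
Permuting the generators is a length-preserving bijection of each sphere, so on average a
`1/N` fraction of the letters of a word of length `n` are `a₁^{±1}`; together with the bound
`2N(2N-1)^{n-1}` on the size of the sphere this gives `avg_n(φ) ≤ 2`. Hence
`ρ_N ≤ λ(φ)/Λ(φ) ≤ 2/(N+1)`, and the limit statements follow since `ρ_N ≥ 0`.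
-/

open Finset

section Chains

variable {β : Type*} [Fintype β] [DecidableEq β] (r : β → β → Prop) [DecidableRel r]

def chainsOfLength : ℕ → Finset (List β)
  | 0 => {[]}
  | n + 1 => (chainsOfLength n).biUnion fun l =>
      ({a | ∀ b ∈ l.head?, r a b} : Finset β).image (· :: l)

variable {r}

theorem mem_chainsOfLength {n : ℕ} {l : List β} :
    l ∈ chainsOfLength r n ↔ l.length = n ∧ l.IsChain r := by
  induction n generalizing l with
  | zero => simp +contextual [chainsOfLength, List.length_eq_zero_iff]
  | succ n ih =>
    cases l with
    | nil => simp [chainsOfLength]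
    | cons a l =>
      simp only [chainsOfLength, Option.mem_def, mem_biUnion, ih, mem_image, mem_filter, mem_univ,
        true_and, List.cons.injEq, ↓existsAndEq, exists_eq_right_right, List.length_cons,
        Nat.add_right_cancel_iff, List.isChain_cons]
      tauto

theorem card_chainsOfLength_le {k : ℕ} (hk : ∀ b, #({a | r a b} : Finset β) ≤ k) (n : ℕ) :
    #(chainsOfLength r (n + 1)) ≤ Fintype.card β * k ^ n := by
  induction n with
  | zero =>
    simp only [chainsOfLength, singleton_biUnion, pow_zero, mul_one]
    exact card_image_le.trans ((card_filter_le _ _).trans_eq card_univ)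
  | succ n ih =>
    have hstep : ∀ l ∈ chainsOfLength r (n + 1),
        #(({a | ∀ b ∈ l.head?, r a b} : Finset β).image (· :: l)) ≤ k := by
      intro l hl
      obtain ⟨b, l, rfl⟩ := List.exists_cons_of_length_eq_add_one (mem_chainsOfLength.mp hl).1
      simpa using card_image_le.trans (hk b)
    calc #(chainsOfLength r (n + 2))
        ≤ ∑ l ∈ chainsOfLength r (n + 1), k := card_biUnion_le.trans (sum_le_sum hstep)
      _ = k * #(chainsOfLength r (n + 1)) := by rw [sum_const, smul_eq_mul, mul_comm]
      _ ≤ k * (Fintype.card β * k ^ n) := by gcongr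
      _ = Fintype.card β * k ^ (n + 1) := by ring

end Chains

namespace FreeGroup

variable {α β : Type*}

theorem le_sum_of_subadditive_lift_mk {G M : Type*} [Group G] [AddCommMonoid M] [PartialOrder M]
    [IsOrderedAddMonoid M] (ℓ : G → M) (h_one : ℓ 1 = 0)
    (h_mul : ∀ x y, ℓ (x * y) ≤ ℓ x + ℓ y) (h_inv : ∀ x, ℓ x⁻¹ = ℓ x) (f : α → G)
    (L : List (α × Bool)) : ℓ (lift f (mk L)) ≤ (L.map fun x => ℓ (f x.1)).sum := by
  rw [lift_mk]
  induction L with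
  | nil => simp [h_one]
  | cons x L ih =>
    simp only [List.map_cons, List.prod_cons, List.sum_cons]
    refine (h_mul _ _).trans (add_le_add ?_ ih)
    cases x.2 <;> simp [h_inv]

theorem norm_lift_le [DecidableEq α] [DecidableEq β] (f : α → FreeGroup β) (w : FreeGroup α) :
    (lift f w).norm ≤ (w.toWord.map fun x => (f x.1).norm).sum := by
  simpa only [mk_toWord] using
    le_sum_of_subadditive_lift_mk norm norm_one norm_mul_le (fun _ => norm_inv_eq) f w.toWord

theorem norm_apply_le_mul [DecidableEq α] [DecidableEq β] (ψ : FreeGroup α →* FreeGroup β)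
    {C : ℕ} (hC : ∀ a, (ψ (of a)).norm ≤ C) (w : FreeGroup α) : (ψ w).norm ≤ C * w.norm := by
  have hψ : lift (ψ ∘ of) = ψ := ext_hom _ _ fun a => by simp
  refine hψ ▸ (norm_lift_le (ψ ∘ of) w).trans ?_
  simpa [mul_comm, norm] using List.sum_le_sum (l := w.toWord) (fun x _ => hC x.1)

theorem norm_of_zpow [DecidableEq α] (a : α) (k : ℤ) : (of a ^ k).norm = k.natAbs := by
  cases k with
  | ofNat n => simp [norm_of_pow]
  | negSucc n => rw [zpow_negSucc, norm_inv_eq, norm_of_pow]; rfl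

def exponentSum : FreeGroup α →* Multiplicative ℤ := lift fun _ => Multiplicative.ofAdd 1

theorem abs_exponentSum_le_norm [DecidableEq α] (w : FreeGroup α) :
    |(exponentSum w).toAdd| ≤ w.norm := by
  have h := le_sum_of_subadditive_lift_mk (fun g : Multiplicative ℤ => |g.toAdd|) (by simp)
    (fun x y => abs_add_le x.toAdd y.toAdd) (fun x => abs_neg x.toAdd)
    (fun _ => Multiplicative.ofAdd (1 : ℤ)) w.toWord
  rw [mk_toWord] at h
  exact h.trans_eq (by simp [norm])

theorem toWord_map_of_injective [DecidableEq α] [DecidableEq β] {f : α → β}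
    (hf : Function.Injective f) (w : FreeGroup α) :
    (map f w).toWord = w.toWord.map (Prod.map f id) := by
  have hred : IsReduced (w.toWord.map (Prod.map f id)) :=
    List.isChain_map_of_isChain _ (fun _ _ h hab => h (hf hab)) isReduced_toWord
  conv_lhs => rw [← mk_toWord (x := w)]
  rw [map.mk, toWord_mk]
  exact hred.reduce_eq

theorem norm_map_of_injective [DecidableEq α] [DecidableEq β] {f : α → β}
    (hf : Function.Injective f) (w : FreeGroup α) : (map f w).norm = w.norm := by
  simp [norm, toWord_map_of_injective hf]

def letterCount [DecidableEq α] (i : α) (w : FreeGroup α) : ℕ := w.toWord.countP (·.1 = i)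

theorem letterCount_map_of_injective [DecidableEq α] [DecidableEq β] {f : α → β}
    (hf : Function.Injective f) (i : α) (w : FreeGroup α) :
    letterCount (f i) (map f w) = letterCount i w := by
  simp [letterCount, toWord_map_of_injective hf, List.countP_map, Function.comp_def, hf.eq_iff]

theorem sum_letterCount [Fintype α] [DecidableEq α] (w : FreeGroup α) :
    ∑ i, letterCount i w = w.norm := by
  unfold letterCount norm
  induction w.toWord with
  | nil => simp
  | cons x L ih => simp [List.countP_cons, sum_add_distrib, ih, add_comm]

variable (α) in
abbrev sphere [DecidableEq α] (n : ℕ) : Type _ := {w : FreeGroup α // w.norm = n}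

section Sphere

variable [Fintype α] [DecidableEq α]

def sphereToChains (n : ℕ) :
    sphere α n ↪ chainsOfLength (fun a b : α × Bool => a.1 = b.1 → a.2 = b.2) n where
  toFun w := ⟨w.1.toWord, mem_chainsOfLength.mpr ⟨w.2, isReduced_toWord⟩⟩
  inj' _ _ h := Subtype.ext (toWord_injective (congrArg Subtype.val h))

noncomputable instance (n : ℕ) : Fintype (sphere α n) :=
  Fintype.ofInjective _ (sphereToChains n).injective

theorem sum_letterCount_sphere_comm (i j : α) (n : ℕ) :
    ∑ w : sphere α n, letterCount i w.1 =
      ∑ w : sphere α n, letterCount j w.1 := by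
  let σ := Equiv.swap i j
  refine Fintype.sum_equiv ((freeGroupCongr σ).toEquiv.subtypeEquiv fun w => ?_) _ _ fun w => ?_
  · simp [norm_map_of_injective σ.injective]
  · simpa [σ] using (letterCount_map_of_injective σ.injective i w.1).symm

theorem card_mul_sum_letterCount_sphere (i : α) (n : ℕ) :
    Fintype.card α * ∑ w : sphere α n, letterCount i w.1 =
      n * Fintype.card (sphere α n) := by
  calc Fintype.card α * ∑ w : sphere α n, letterCount i w.1
      = ∑ j : α, ∑ w : sphere α n, letterCount j w.1 := by
        rw [sum_congr rfl fun j _ => (sum_letterCount_sphere_comm i j n).symm, sum_const,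
          card_univ, smul_eq_mul]
    _ = ∑ w : sphere α n, w.1.norm := by
        rw [sum_comm]; simp only [sum_letterCount]
    _ = n * Fintype.card (sphere α n) := by
        rw [sum_congr rfl fun w _ => w.2, sum_const, card_univ, smul_eq_mul, mul_comm]

theorem card_sphere_le (n : ℕ) :
    Fintype.card (sphere α (n + 1)) ≤
      2 * Fintype.card α * (2 * Fintype.card α - 1) ^ n := by
  let r : α × Bool → α × Bool → Prop := fun a b => a.1 = b.1 → a.2 = b.2
  have hr : ∀ b, #({a | r a b} : Finset (α × Bool)) ≤ 2 * Fintype.card α - 1 := fun b =>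
    calc #({a | r a b} : Finset (α × Bool))
        ≤ #(univ.erase (b.1, !b.2)) := card_le_card fun a ha =>
          mem_erase.mpr ⟨by rintro rfl; simp [r] at ha, mem_univ a⟩
      _ = 2 * Fintype.card α - 1 := by
          simp [card_erase_of_mem, Fintype.card_prod, mul_comm]
  calc Fintype.card (sphere α (n + 1))
      ≤ #(chainsOfLength r (n + 1)) :=
        (Fintype.card_le_of_embedding (sphereToChains _)).trans_eq (Fintype.card_coe _)
    _ ≤ 2 * Fintype.card α * (2 * Fintype.card α - 1) ^ n := by
        simpa [mul_comm] using card_chainsOfLength_le hr n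

end Sphere

section Transvection

variable [DecidableEq α]

def transvection (i j : α) (k : ℤ) : FreeGroup α →* FreeGroup α :=
  lift (Function.update of i (of i * of j ^ k))

variable {i j : α} {k : ℤ}

@[simp]
theorem transvection_of_self : transvection i j k (of i) = of i * of j ^ k := by
  simp [transvection]

@[simp]
theorem transvection_of_of_ne {a : α} (ha : a ≠ i) : transvection i j k (of a) = of a := by
  simp [transvection, ha]

theorem transvection_comp (hij : i ≠ j) (k l : ℤ) :
    (transvection i j k).comp (transvection i j l) = transvection i j (k + l) := by
  ext a
  by_cases ha : a = i
  · subst ha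
    simp [transvection_of_of_ne hij.symm, mul_assoc, zpow_add]
  · simp [ha]

theorem transvection_zero : transvection i j 0 = MonoidHom.id (FreeGroup α) := by
  ext a
  by_cases ha : a = i <;> simp [ha]

def transvectionEquiv (hij : i ≠ j) (k : ℤ) : MulAut (FreeGroup α) :=
  (transvection i j k).toMulEquiv (transvection i j (-k))
    (by rw [transvection_comp hij, neg_add_cancel, transvection_zero])
    (by rw [transvection_comp hij, add_neg_cancel, transvection_zero])

theorem norm_transvection_of_le (a : α) :
    (transvection i j k (of a)).norm ≤ 1 + k.natAbs * if a = i then 1 else 0 := by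
  by_cases ha : a = i
  · subst ha
    simpa [norm_of, norm_of_zpow] using norm_mul_le (of a) (of j ^ k)
  · simp [ha, norm_of]

theorem norm_transvection_le (w : FreeGroup α) :
    (transvection i j k w).norm ≤ w.norm + k.natAbs * letterCount i w := by
  refine (norm_lift_le _ w).trans ?_
  show _ ≤ w.toWord.length + k.natAbs * w.toWord.countP (·.1 = i)
  induction w.toWord with
  | nil => simp
  | cons x L ih =>
    have hx : (Function.update of i (of i * of j ^ k) x.1).norm ≤
        1 + k.natAbs * if x.1 = i then 1 else 0 := by
      simpa [transvection] using norm_transvection_of_le (j := j) (k := k) x.1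
    simp only [List.map_cons, List.sum_cons, List.length_cons, List.countP_cons,
      decide_eq_true_eq]
    split_ifs at hx ⊢ <;> nlinarith

theorem card_mul_sum_norm_transvection_sphere_le [Fintype α] (n : ℕ) :
    Fintype.card α * ∑ w : sphere α n, (transvection i j k w.1).norm ≤
      (Fintype.card α + k.natAbs) * (n * Fintype.card (sphere α n)) := by
  calc Fintype.card α * ∑ w : sphere α n, (transvection i j k w.1).norm
      ≤ Fintype.card α * ∑ w : sphere α n, (n + k.natAbs * letterCount i w.1) := by
        gcongr with w
        simpa [w.2] using norm_transvection_le w.1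
    _ = Fintype.card α * (n * Fintype.card (sphere α n)) +
          k.natAbs * (Fintype.card α * ∑ w : sphere α n, letterCount i w.1) := by
        rw [sum_add_distrib, ← mul_sum, sum_const, card_univ, smul_eq_mul]; ring
    _ = _ := by rw [card_mul_sum_letterCount_sphere]; ring

end Transvection

end FreeGroup

open FreeGroup Filter

section StretchingFactors

variable {N : ℕ}

theorem wlen_eq_norm (w : FreeGroup (Fin N)) : wlen w = w.norm := rfl

theorem cyclen_le_wlen_conj (g w : FreeGroup (Fin N)) : cyclen w ≤ wlen (g * w * g⁻¹) :=
  Nat.sInf_le ⟨g, rfl⟩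

theorem exists_wlen_conj_eq_cyclen (w : FreeGroup (Fin N)) : ∃ g, wlen (g * w * g⁻¹) = cyclen w :=
  Nat.sInf_mem (Set.range_nonempty _)

theorem cyclen_le_wlen (w : FreeGroup (Fin N)) : cyclen w ≤ wlen w := by
  simpa using cyclen_le_wlen_conj 1 w

theorem cyclen_conj_le (g w : FreeGroup (Fin N)) : cyclen (g * w * g⁻¹) ≤ cyclen w := by
  obtain ⟨h, hh⟩ := exists_wlen_conj_eq_cyclen w
  calc cyclen (g * w * g⁻¹)
      ≤ wlen (h * g⁻¹ * (g * w * g⁻¹) * (h * g⁻¹)⁻¹) := cyclen_le_wlen_conj _ _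
    _ = cyclen w := by rw [← hh]; group

theorem cyclen_conj (g w : FreeGroup (Fin N)) : cyclen (g * w * g⁻¹) = cyclen w :=
  le_antisymm (cyclen_conj_le g w) (by simpa [mul_assoc] using cyclen_conj_le g⁻¹ (g * w * g⁻¹))

theorem cyclen_pos {w : FreeGroup (Fin N)} (hw : w ≠ 1) : 0 < cyclen w := by
  obtain ⟨g, hg⟩ := exists_wlen_conj_eq_cyclen w
  rw [← hg, pos_iff_ne_zero, wlen_eq_norm, Ne, FreeGroup.norm_eq_zero, conj_eq_one_iff]
  exact hw

theorem cyclen_of (a : Fin N) : cyclen (of a) = 1 :=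
  le_antisymm ((cyclen_le_wlen _).trans (norm_of a).le) (cyclen_pos (of_ne_one a))

theorem cyclen_apply_le_mul (ψ : FreeGroup (Fin N) →* FreeGroup (Fin N)) {C : ℕ}
    (hC : ∀ a, (ψ (of a)).norm ≤ C) (w : FreeGroup (Fin N)) : cyclen (ψ w) ≤ C * cyclen w := by
  obtain ⟨g, hg⟩ := exists_wlen_conj_eq_cyclen w
  calc cyclen (ψ w) = cyclen (ψ (g * w * g⁻¹)) := by simp [cyclen_conj]
    _ ≤ wlen (ψ (g * w * g⁻¹)) := cyclen_le_wlen _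
    _ ≤ C * cyclen w := hg ▸ norm_apply_le_mul ψ hC _

theorem abs_exponentSum_le_cyclen (w : FreeGroup (Fin N)) : |(exponentSum w).toAdd| ≤ cyclen w := by
  obtain ⟨g, hg⟩ := exists_wlen_conj_eq_cyclen w
  simpa [← hg, wlen_eq_norm] using abs_exponentSum_le_norm (g * w * g⁻¹)

theorem LambdaA_nonneg (φ : FreeGroup (Fin N) → FreeGroup (Fin N)) : 0 ≤ LambdaA φ :=
  Real.iSup_nonneg fun _ => by positivity

theorem avg_nonneg (φ : FreeGroup (Fin N) → FreeGroup (Fin N)) (n : ℕ) : 0 ≤ avg N φ n :=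
  div_nonneg (tsum_nonneg fun _ => by positivity) (by positivity)

theorem lamA_nonneg (φ : FreeGroup (Fin N) → FreeGroup (Fin N)) : 0 ≤ lamA N φ := by
  rw [lamA, limsup_eq]
  exact Real.sInf_nonneg fun a ha => (avg_nonneg φ ha.exists.choose).trans ha.exists.choose_spec

theorem rho_nonneg (N : ℕ) : 0 ≤ rho N :=
  Real.iInf_nonneg fun _ => div_nonneg (lamA_nonneg _) (LambdaA_nonneg _)

theorem le_LambdaA_transvection (i j : Fin N) (k : ℤ) :
    |1 + (k : ℝ)| ≤ LambdaA (transvection i j k) := by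
  have hbdd : BddAbove (Set.range fun w : {w : FreeGroup (Fin N) // w ≠ 1} =>
      (cyclen (transvection i j k w.1) : ℝ) / cyclen w.1) := by
    refine ⟨1 + k.natAbs, Set.forall_mem_range.mpr fun w => ?_⟩
    rw [div_le_iff₀ (by exact_mod_cast cyclen_pos w.2)]
    have hC (a : Fin N) : (transvection i j k (of a)).norm ≤ 1 + k.natAbs :=
      (norm_transvection_of_le a).trans (by split_ifs <;> simp)
    exact_mod_cast cyclen_apply_le_mul _ hC w.1
  refine le_ciSup_of_le hbdd ⟨of i, of_ne_one i⟩ ?_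
  have hsum : (exponentSum (transvection i j k (of i))).toAdd = 1 + k := by simp [exponentSum]
  have h := abs_exponentSum_le_cyclen (transvection i j k (of i))
  rw [hsum] at h
  rw [cyclen_of, Nat.cast_one, div_one]
  exact_mod_cast h

theorem card_mul_sum_cyclen_transvection_sphere_le (i j : Fin N) (k : ℤ) (n : ℕ) :
    N * ∑ w : sphere (Fin N) (n + 1), cyclen (transvection i j k w.1) ≤
      (N + k.natAbs) * ((n + 1) * (2 * N * (2 * N - 1) ^ n)) :=
  calc N * ∑ w : sphere (Fin N) (n + 1), cyclen (transvection i j k w.1)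
      ≤ N * ∑ w : sphere (Fin N) (n + 1), (transvection i j k w.1).norm := by
        gcongr with w; exact cyclen_le_wlen _
    _ ≤ (N + k.natAbs) * ((n + 1) * Fintype.card (sphere (Fin N) (n + 1))) := by
        simpa using card_mul_sum_norm_transvection_sphere_le (i := i) (j := j) (k := k) (n + 1)
    _ ≤ (N + k.natAbs) * ((n + 1) * (2 * N * (2 * N - 1) ^ n)) := by
        simpa using Nat.mul_le_mul_left _ (Nat.mul_le_mul_left _ (card_sphere_le (α := Fin N) n))

theorem avg_transvection_le (i j : Fin N) (k : ℤ) (n : ℕ) :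
    avg N (transvection i j k) (n + 1) ≤ 1 + k.natAbs / N := by
  have hN : 0 < N := i.pos
  have hD : 0 < 2 * N * (2 * N - 1) ^ n := by
    have : 0 < 2 * N - 1 := by omega
    positivity
  rw [avg, Nat.add_sub_cancel, div_le_iff₀ (by positivity)]
  -- `wlen` is `FreeGroup.norm`, whose spheres carry the `Fintype` instance above
  change ∑' w : sphere (Fin N) (n + 1), (cyclen (transvection i j k w.1) : ℝ) ≤ _
  rw [tsum_fintype, ← mul_le_mul_iff_of_pos_left (Nat.cast_pos.mpr hN)]
  calc (N : ℝ) * ∑ w : sphere (Fin N) (n + 1), (cyclen (transvection i j k w.1) : ℝ)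
      ≤ (N + k.natAbs) * ((n + 1) * (2 * N * (2 * N - 1) ^ n : ℕ)) := by
        exact_mod_cast card_mul_sum_cyclen_transvection_sphere_le i j k n
    _ = N * ((1 + k.natAbs / N) * ((n + 1 : ℕ) * (2 * N * (2 * N - 1) ^ n : ℕ))) := by
        field_simp; push_cast; ring

theorem lamA_transvection_le (i j : Fin N) (k : ℤ) :
    lamA N (transvection i j k) ≤ 1 + k.natAbs / N :=
  limsup_le_of_le (isCoboundedUnder_le_of_le atTop (avg_nonneg _))
    (eventually_atTop.mpr ⟨1, fun n hn => by
      obtain ⟨m, rfl⟩ := Nat.exists_eq_add_of_le' hn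
      exact avg_transvection_le i j k m⟩)

theorem rho_le (hN : 2 ≤ N) : rho N ≤ 2 / (N + 1) := by
  let i : Fin N := ⟨0, by omega⟩
  let j : Fin N := ⟨1, hN⟩
  have hij : i ≠ j := by simp [i, j, Fin.ext_iff]
  let φ := transvectionEquiv hij N
  have hbdd : BddBelow (Set.range fun φ : MulAut (FreeGroup (Fin N)) =>
      lamA N (fun w => φ w) / LambdaA (fun w => φ w)) :=
    ⟨0, Set.forall_mem_range.mpr fun _ => div_nonneg (lamA_nonneg _) (LambdaA_nonneg _)⟩
  calc rho N ≤ lamA N (fun w => φ w) / LambdaA (fun w => φ w) := ciInf_le hbdd φ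
    _ ≤ (1 + (N : ℤ).natAbs / N) / |1 + ((N : ℤ) : ℝ)| :=
      div_le_div₀ (by positivity) (lamA_transvection_le i j N) (by positivity)
        (le_LambdaA_transvection i j N)
    _ = 2 / (N + 1) := by
      have : (N : ℝ) ≠ 0 := by positivity
      rw [Int.natAbs_natCast, div_self this, Int.cast_natCast, abs_of_nonneg (by positivity)]
      norm_num [add_comm]

end StretchingFactors

/-- `ρ_N ≤ 2/(N+1)` for every `N ≥ 2`; consequently `ρ_N → 0` as
`N → ∞`, and `N·ρ_N` is bounded above as `N → ∞` (i.e. `ρ_N = O(1/N)`). -/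
theorem stmt11 :
    (∀ N : ℕ, 2 ≤ N → rho N ≤ 2 / (N + 1)) ∧
    Filter.Tendsto rho Filter.atTop (nhds 0) ∧
    ∃ C : ℝ, ∀ᶠ N : ℕ in Filter.atTop, (N : ℝ) * rho N ≤ C := by
  have hρ : ∀ N : ℕ, 2 ≤ N → rho N ≤ 2 / (N + 1) := fun _ => rho_le
  refine ⟨hρ, ?_, 2, ?_⟩
  · have hbound : Tendsto (fun N : ℕ => 2 / ((N : ℝ) + 1)) atTop (nhds 0) :=
      tendsto_const_nhds.div_atTop (tendsto_natCast_atTop_atTop.atTop_add tendsto_const_nhds)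
    exact tendsto_of_tendsto_of_tendsto_of_le_of_le' tendsto_const_nhds hbound
      (Eventually.of_forall rho_nonneg) (eventually_atTop.mpr ⟨2, hρ⟩)
  · filter_upwards [eventually_ge_atTop 2] with N hN
    calc (N : ℝ) * rho N ≤ N * (2 / (N + 1)) := by gcongr; exact hρ N hN
      _ ≤ 2 := by rw [mul_div_assoc', div_le_iff₀ (by positivity)]; linarith
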